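/- arXiv:math/0606364 — 3 statements merged into one kernel-verified Lean document; each statement's English description precedes it below -/
import Mathlib

section
/- Each element u_J (J ⊆ X) is an idempotent of A (u_J·u_J = u_J), and ∑_{J ⊆ X} u_J = e_∅, the identity element of A. -/
/-- The power set `2^X` of `X`, regarded as a commutative monoid under
union, with identity the empty set (a unital semilattice). -/
def finsetUnionMonoid (X : Type*) [DecidableEq X] : CommMonoid (Finset X) where
  mul := (· ∪ ·)
  one := ∅
  mul_assoc := Finset.union_assoc
  one_mul := Finset.empty_union
  mul_one := Finset.union_empty
  mul_comm := Finset.union_comm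

attribute [local instance] finsetUnionMonoid

variable {X : Type*} [Fintype X] [DecidableEq X]

/-- The basis element `e_J` of the semigroup algebra `A = MonoidAlgebra ℂ (2^X)`
supported at `J ⊆ X`; one has `e_J * e_K = e_{J ∪ K}` and `e_∅ = 1`. -/
noncomputable def e (J : Finset X) : MonoidAlgebra ℂ (Finset X) :=
  MonoidAlgebra.single J 1

/-- `u_J = (∏_{i ∈ J} e_{{i}}) * (∏_{k ∈ X \ J} (e_∅ - e_{{k}}))`. -/
noncomputable def u (J : Finset X) : MonoidAlgebra ℂ (Finset X) :=
  (∏ i ∈ J, e {i}) * ∏ k ∈ Jᶜ, (e ∅ - e {k})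

lemma e_mul (J K : Finset X) : e J * e K = e (J ∪ K) := by
  simp [e, MonoidAlgebra.single_mul_single]
  rfl

lemma e_empty : (e ∅ : MonoidAlgebra ℂ (Finset X)) = 1 := rfl

lemma e_idem (J : Finset X) : e J * e J = e J := by
  rw [e_mul, Finset.union_self]

lemma one_sub_e_idem (J : Finset X) :
    (1 - e J) * (1 - e J) = (1 - e J : MonoidAlgebra ℂ (Finset X)) := by
  have := e_idem J
  ring_nf
  rw [pow_two, this]
  ring

/-- Each `u_J` (`J ⊆ X`) is an idempotent of `A`, and `∑_{J ⊆ X} u_J = e_∅`,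
the identity element of `A`. -/
theorem u_idem_and_sum_u (X : Type*) [Fintype X] [DecidableEq X] :
    (∀ J : Finset X, u J * u J = u J) ∧ (∑ J : Finset X, u J = e ∅) := by
  constructor
  · intro J
    unfold u
    rw [mul_mul_mul_comm, ← Finset.prod_mul_distrib, ← Finset.prod_mul_distrib]
    congr 1
    · exact Finset.prod_congr rfl fun i _ => e_idem {i}
    · exact Finset.prod_congr rfl fun k _ => by
        rw [e_empty]; exact one_sub_e_idem {k}
  · have h : ∀ J : Finset X, u J =
        (∏ i ∈ J, e {i}) * ∏ k ∈ Finset.univ \ J, (1 - e {k}) := by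
      intro J
      unfold u
      rw [e_empty, Finset.compl_eq_univ_sdiff]
    calc ∑ J : Finset X, u J
        = ∑ J ∈ (Finset.univ : Finset X).powerset,
            (∏ i ∈ J, e {i}) * ∏ k ∈ Finset.univ \ J, (1 - e {k}) := by
          rw [Finset.powerset_univ]
          exact Finset.sum_congr rfl fun J _ => h J
      _ = ∏ i ∈ (Finset.univ : Finset X), (e {i} + (1 - e {i})) :=
          (Finset.prod_add _ _ _).symm
      _ = e ∅ := by simp [e_empty]
end

section
/- With s_n : C_n(F) → C_{n+1}(F) defined by s_0 = 0 and s_n(a_0 ⊗ a_1 ⊗ … ⊗ a_n) = ∑_{J ⊆ X} (a_0·u_J) ⊗ u_J ⊗ a_1 ⊗ … ⊗ a_n for n ≥ 1, one has the ℓ¹-operator bound ‖s_n(ξ)‖₁ ≤ 5^{|X|}·‖ξ‖₁ for every n ≥ 0 and every ξ ∈ C_n(F). -/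
open Finsupp

attribute [local instance] finsetUnionMonoid

/-- The space of Hochschild `n`-chains of (the semigroup algebra of) `S`:
finitely supported `ℂ`-valued functions on `(n+1)`-tuples, with canonical basis
vectors `[x_0, …, x_n]` given by `Finsupp.single`.  It is identified with
`A ⊗ A^{⊗n}` via `[x_0, …, x_n] ↦ e_{x_0} ⊗ ⋯ ⊗ e_{x_n}`. -/
abbrev Cn (S : Type*) (n : ℕ) := (Fin (n + 1) → S) →₀ ℂ

/-- The Hochschild boundary map `d_n : C_{n+1}(S) → C_n(S)`, determined on basis vectors by
`d_n[x_0,…,x_{n+1}] = ∑_{j=0}^{n} (-1)^j [x_0,…,x_j·x_{j+1},…,x_{n+1}]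
  + (-1)^{n+1} [x_{n+1}·x_0, x_1,…,x_n]`. -/
noncomputable def dH (S : Type*) [Monoid S] (n : ℕ) : Cn S (n + 1) →ₗ[ℂ] Cn S n :=
  Finsupp.lift (Cn S n) ℂ (Fin (n + 2) → S) fun x =>
    (∑ j : Fin (n + 1), ((-1 : ℂ) ^ (j : ℕ)) •
        Finsupp.single (Fin.contractNth j.castSucc (· * ·) x) 1)
      + ((-1 : ℂ) ^ (n + 1)) •
        Finsupp.single
          (fun i : Fin (n + 1) => if i = 0 then x (Fin.last (n + 1)) * x 0 else x i.castSucc) 1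

variable {X : Type*} [Fintype X] [DecidableEq X]

/-- The trilinear map realising `b ⊗ c ⊗ (e_{y_1} ⊗ ⋯ ⊗ e_{y_n}) ∈ A ⊗ A ⊗ A^{⊗ n}`
as an element of `C_{n+1}(2^X) = A ⊗ A^{⊗ (n+1)}` (in the Finsupp model). -/
noncomputable def ins (n : ℕ) :
    MonoidAlgebra ℂ (Finset X) →ₗ[ℂ] MonoidAlgebra ℂ (Finset X) →ₗ[ℂ]
      ((Fin n → Finset X) →₀ ℂ) →ₗ[ℂ] ((Fin (n + 2) → Finset X) →₀ ℂ) :=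
  (Finsupp.lift (MonoidAlgebra ℂ (Finset X) →ₗ[ℂ]
        ((Fin n → Finset X) →₀ ℂ) →ₗ[ℂ] ((Fin (n + 2) → Finset X) →₀ ℂ)) ℂ (Finset X) fun K =>
    (Finsupp.lift (((Fin n → Finset X) →₀ ℂ) →ₗ[ℂ] ((Fin (n + 2) → Finset X) →₀ ℂ)) ℂ
        (Finset X) fun L =>
      Finsupp.lmapDomain ℂ ℂ fun (y : Fin n → Finset X) =>
        (Fin.cons K (Fin.cons L y : Fin (n + 1) → Finset X) : Fin (n + 2) → Finset X)) ∘ₗ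
      (MonoidAlgebra.coeffLinearEquiv ℂ).toLinearMap) ∘ₗ
    (MonoidAlgebra.coeffLinearEquiv ℂ).toLinearMap

/-- The splitting maps `s_n : C_n(2^X) → C_{n+1}(2^X)`: `s_0 = 0` and, for `n ≥ 1`,
`s_n(a_0 ⊗ a_1 ⊗ ⋯ ⊗ a_n) = ∑_{J ⊆ X} (a_0·u_J) ⊗ u_J ⊗ a_1 ⊗ ⋯ ⊗ a_n`
(defined on the basis vectors `a_i = e_{x_i}` and extended by linearity). -/
noncomputable def sMap : (n : ℕ) → Cn (Finset X) n →ₗ[ℂ] Cn (Finset X) (n + 1)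
  | 0 => 0
  | n + 1 =>
    Finsupp.lift _ ℂ (Fin (n + 2) → Finset X) fun x =>
      ∑ J : Finset X, ins (n + 1) (e (x 0) * u J) (u J)
        (Finsupp.single (fun i : Fin (n + 1) => x i.succ) 1)

/-- The ℓ¹-norm on `C_n(S)`: the sum of the absolute values of the coefficients
with respect to the canonical basis. -/
noncomputable def l1 {α : Type*} (ξ : α →₀ ℂ) : ℝ := ∑ a ∈ ξ.support, ‖ξ a‖

/-! The ℓ¹-norm is submultiplicative on the semigroup algebra, and the ℓ¹-operator norm of a linear
map between spaces of finitely supported functions is attained on basis vectors. On a basis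
vector, `s_n` is a sum over `J ⊆ X` of `(e_{x_0} u_J) ⊗ u_J ⊗ ⋯`, where `u_J` is a product of basis
vectors and of `|X ∖ J|` differences `e_∅ - e_k` of norm `≤ 2`; so the `J`-th term has norm
`≤ 4^{|X ∖ J|}`, and `∑_J 4^{|X ∖ J|} = 5^{|X|}` by the binomial theorem. -/

section l1

variable {α β γ : Type*}

lemma l1_nonneg (ξ : α →₀ ℂ) : 0 ≤ l1 ξ :=
  Finset.sum_nonneg fun _ _ => norm_nonneg _

lemma l1_eq_sum_of_support_subset {s : Finset α} {ξ : α →₀ ℂ} (h : ξ.support ⊆ s) :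
    l1 ξ = ∑ a ∈ s, ‖ξ a‖ :=
  Finset.sum_subset h fun a _ ha => by simp [Finsupp.notMem_support_iff.mp ha]

@[simp]
lemma l1_zero : l1 (0 : α →₀ ℂ) = 0 := by
  simp [l1]

@[simp]
lemma l1_single (a : α) (c : ℂ) : l1 (Finsupp.single a c) = ‖c‖ := by
  classical
  rcases eq_or_ne c 0 with rfl | hc
  · simp
  · simp [l1, Finsupp.support_single a hc]

@[simp]
lemma l1_neg (ξ : α →₀ ℂ) : l1 (-ξ) = l1 ξ := by
  simp [l1]

lemma l1_smul (c : ℂ) (ξ : α →₀ ℂ) : l1 (c • ξ) = ‖c‖ * l1 ξ := by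
  classical
  rw [l1_eq_sum_of_support_subset Finsupp.support_smul, l1, Finset.mul_sum]
  simp

lemma l1_add_le (ξ η : α →₀ ℂ) : l1 (ξ + η) ≤ l1 ξ + l1 η := by
  classical
  rw [l1_eq_sum_of_support_subset Finsupp.support_add,
    l1_eq_sum_of_support_subset (ξ := ξ) Finset.subset_union_left,
    l1_eq_sum_of_support_subset (ξ := η) Finset.subset_union_right, ← Finset.sum_add_distrib]
  exact Finset.sum_le_sum fun a _ => norm_add_le (ξ a) (η a)

lemma l1_sub_le (ξ η : α →₀ ℂ) : l1 (ξ - η) ≤ l1 ξ + l1 η := by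
  simpa [sub_eq_add_neg] using l1_add_le ξ (-η)

lemma l1_sum_le {ι : Type*} (s : Finset ι) (f : ι → α →₀ ℂ) :
    l1 (∑ i ∈ s, f i) ≤ ∑ i ∈ s, l1 (f i) :=
  Finset.le_sum_of_subadditive l1 l1_zero.le l1_add_le s f

lemma l1_map_le (f : (α →₀ ℂ) →ₗ[ℂ] β →₀ ℂ) {C : ℝ}
    (h : ∀ a, l1 (f (Finsupp.single a 1)) ≤ C) (ξ : α →₀ ℂ) : l1 (f ξ) ≤ C * l1 ξ := by
  have hf : f ξ = ∑ a ∈ ξ.support, ξ a • f (Finsupp.single a 1) := by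
    conv_lhs => rw [← ξ.sum_single]
    simp [Finsupp.sum, ← map_smul]
  calc l1 (f ξ) ≤ ∑ a ∈ ξ.support, ‖ξ a‖ * l1 (f (Finsupp.single a 1)) := by
        rw [hf]; exact (l1_sum_le _ _).trans_eq (by simp only [l1_smul])
    _ ≤ ∑ a ∈ ξ.support, ‖ξ a‖ * C :=
        Finset.sum_le_sum fun a _ => mul_le_mul_of_nonneg_left (h a) (norm_nonneg _)
    _ = C * l1 ξ := by rw [l1, ← Finset.sum_mul, mul_comm]

lemma l1_map₂_le (f : (α →₀ ℂ) →ₗ[ℂ] (β →₀ ℂ) →ₗ[ℂ] γ →₀ ℂ) {C : ℝ}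
    (h : ∀ a b, l1 (f (Finsupp.single a 1) (Finsupp.single b 1)) ≤ C) (ξ : α →₀ ℂ)
    (η : β →₀ ℂ) : l1 (f ξ η) ≤ C * l1 ξ * l1 η := by
  rw [mul_right_comm]
  exact l1_map_le (f.flip η) (fun a => l1_map_le (f (Finsupp.single a 1)) (h a) η) ξ

end l1

open MonoidAlgebra

section MonoidAlgebra

variable {M : Type*}

lemma l1_coeff_mul_le [Monoid M] (a b : MonoidAlgebra ℂ M) :
    l1 (a * b).coeff ≤ l1 a.coeff * l1 b.coeff := by
  let mulCoeff : (M →₀ ℂ) →ₗ[ℂ] (M →₀ ℂ) →ₗ[ℂ] M →₀ ℂ :=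
    ((LinearMap.mul ℂ (MonoidAlgebra ℂ M)).compl₁₂ (coeffLinearEquiv ℂ).symm.toLinearMap
      (coeffLinearEquiv ℂ).symm.toLinearMap).compr₂ (coeffLinearEquiv ℂ).toLinearMap
  have hmul : (a * b).coeff = mulCoeff a.coeff b.coeff := by simp [mulCoeff]
  simpa [hmul] using l1_map₂_le mulCoeff (C := 1) (fun m m' => by simp [mulCoeff]) a.coeff b.coeff

lemma l1_coeff_prod_le [CommMonoid M] {ι : Type*} (s : Finset ι) (f : ι → MonoidAlgebra ℂ M) :
    l1 (∏ i ∈ s, f i).coeff ≤ ∏ i ∈ s, l1 (f i).coeff :=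
  Finset.le_prod_of_submultiplicative_of_nonneg (fun a => l1 a.coeff) (fun a => l1_nonneg _)
    (by simp [one_def]) l1_coeff_mul_le s f

end MonoidAlgebra

lemma l1_coeff_u_le (J : Finset X) : l1 (u J).coeff ≤ 2 ^ Jᶜ.card := by
  have hfactor (k : X) : l1 (e ∅ - e {k}).coeff ≤ 2 := by
    simpa [e, one_add_one_eq_two] using l1_sub_le (e ∅).coeff (e {k}).coeff
  have hsplit : l1 (u J).coeff
      ≤ (∏ i ∈ J, l1 (e {i}).coeff) * ∏ k ∈ Jᶜ, l1 (e ∅ - e {k}).coeff :=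
    (l1_coeff_mul_le _ _).trans <| mul_le_mul (l1_coeff_prod_le _ _) (l1_coeff_prod_le _ _)
      (l1_nonneg _) (Finset.prod_nonneg fun _ _ => l1_nonneg _)
  calc l1 (u J).coeff ≤ ∏ k ∈ Jᶜ, l1 (e ∅ - e {k}).coeff := by simpa [e] using hsplit
    _ ≤ ∏ k ∈ Jᶜ, (2 : ℝ) := Finset.prod_le_prod (fun _ _ => l1_nonneg _) fun k _ => hfactor k
    _ = 2 ^ Jᶜ.card := Finset.prod_const 2

lemma l1_ins_le {X : Type*} (n : ℕ) (a b : MonoidAlgebra ℂ (Finset X)) (y : Fin n → Finset X) :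
    l1 (ins n a b (Finsupp.single y 1)) ≤ l1 a.coeff * l1 b.coeff := by
  let insCoeff : (Finset X →₀ ℂ) →ₗ[ℂ] (Finset X →₀ ℂ) →ₗ[ℂ] (Fin (n + 2) → Finset X) →₀ ℂ :=
    ((ins n).compl₁₂ (coeffLinearEquiv ℂ).symm.toLinearMap
      (coeffLinearEquiv ℂ).symm.toLinearMap).compr₂ (LinearMap.applyₗ (Finsupp.single y 1))
  have hins : ins n a b (Finsupp.single y 1) = insCoeff a.coeff b.coeff := by simp [insCoeff]
  simpa [hins] using
    l1_map₂_le insCoeff (C := 1) (fun K L => by simp [insCoeff, ins]) a.coeff b.coeff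

lemma sMap_succ_single (n : ℕ) (x : Fin (n + 2) → Finset X) :
    sMap (n + 1) (Finsupp.single x 1) =
      ∑ J : Finset X, ins (n + 1) (e (x 0) * u J) (u J)
        (Finsupp.single (fun i : Fin (n + 1) => x i.succ) 1) := by
  simp [sMap]

lemma sum_four_pow_card_compl : ∑ J : Finset X, (4 : ℝ) ^ Jᶜ.card = 5 ^ Fintype.card X := by
  simpa [Finset.card_compl, show (1 : ℝ) + 4 = 5 by norm_num] using
    Fintype.sum_pow_mul_eq_add_pow X (1 : ℝ) 4

lemma l1_sMap_single_le (n : ℕ) (x : Fin (n + 1) → Finset X) :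
    l1 (sMap n (Finsupp.single x 1)) ≤ 5 ^ Fintype.card X := by
  cases n with
  | zero => simp [sMap]
  | succ n =>
    rw [sMap_succ_single, ← sum_four_pow_card_compl]
    refine (l1_sum_le _ _).trans <| Finset.sum_le_sum fun J _ => ?_
    have he : l1 (e (x 0) * u J).coeff ≤ 2 ^ Jᶜ.card :=
      (l1_coeff_mul_le _ _).trans (by simpa [e] using l1_coeff_u_le J)
    calc _ ≤ l1 (e (x 0) * u J).coeff * l1 (u J).coeff := l1_ins_le _ _ _ _
      _ ≤ 2 ^ Jᶜ.card * 2 ^ Jᶜ.card :=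
          mul_le_mul he (l1_coeff_u_le J) (l1_nonneg _) (by positivity)
      _ = 4 ^ Jᶜ.card := by rw [← mul_pow]; norm_num

/-- The ℓ¹-operator bound `‖s_n(ξ)‖₁ ≤ 5^{|X|}·‖ξ‖₁` for every `n ≥ 0` and
every `ξ ∈ C_n(2^X)`. -/
theorem l1_sMap_le (X : Type*) [Fintype X] [DecidableEq X] (n : ℕ) (ξ : Cn (Finset X) n) :
    l1 (sMap n ξ) ≤ 5 ^ (Fintype.card X) * l1 ξ :=
  l1_map_le (sMap n) (l1_sMap_single_le n) ξ
end

section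
/- Let X be a type, let E and F be Banach spaces over ℂ, let q : E → F be a surjective continuous linear map, and let T : ℓ¹(X) → F be a continuous linear map. Then there exists a continuous linear map S : ℓ¹(X) → E such that q ∘ S = T. (The space ℓ¹(X) has the lifting property with respect to continuous linear surjections of Banach spaces.) -/
open scoped ENNReal

/-- The lifting property of `ℓ¹(X)` with respect to continuous linear surjections of
Banach spaces: if `q : E → F` is a surjective continuous linear map and
`T : ℓ¹(X) → F` is a continuous linear map, then there is a continuous linear map
`S : ℓ¹(X) → E` with `q ∘ S = T`. -/
theorem l1_lifting_property (X : Type*) (E F : Type*)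
    [NormedAddCommGroup E] [NormedSpace ℂ E] [CompleteSpace E]
    [NormedAddCommGroup F] [NormedSpace ℂ F] [CompleteSpace F]
    (q : E →L[ℂ] F) (hq : Function.Surjective q)
    (T : lp (fun _ : X => ℂ) 1 →L[ℂ] F) :
    ∃ S : lp (fun _ : X => ℂ) 1 →L[ℂ] E, q.comp S = T := by
  classical
  obtain ⟨C, hC0, hC⟩ := q.exists_preimage_norm_le hq
  -- choose lifts of T (single x 1)
  choose e he hen using fun x : X => hC (T (lp.single 1 x (1 : ℂ)))
  have hp : (0:ℝ) < (1 : ℝ≥0∞).toReal := by norm_num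
  set M : ℝ := C * ‖T‖ with hM
  have hMnonneg : 0 ≤ M := mul_nonneg hC0.le (norm_nonneg T)
  have heM : ∀ x, ‖e x‖ ≤ M := by
    intro x
    refine (hen x).trans ?_
    have h1 : ‖(lp.single 1 x (1:ℂ) : lp (fun _ : X => ℂ) 1)‖ = 1 := by
      simpa using lp.norm_single (E := fun _ : X => ℂ) (p := 1) hp (fun _ => (1:ℂ)) x
    have h2 := T.le_opNorm (lp.single 1 x (1:ℂ))
    rw [h1, mul_one] at h2
    exact mul_le_mul_of_nonneg_left h2 hC0.le
  -- summability of the norms of f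
  have hfs : ∀ f : lp (fun _ : X => ℂ) 1, Summable fun x => ‖f x‖ := by
    intro f
    have := (lp.memℓp f).summable hp
    simpa using this
  have hsumn : ∀ f : lp (fun _ : X => ℂ) 1, Summable fun x => ‖f x • e x‖ := by
    intro f
    refine Summable.of_nonneg_of_le (fun x => norm_nonneg _) ?_ ((hfs f).mul_right M)
    intro x
    rw [norm_smul]
    exact mul_le_mul_of_nonneg_left (heM x) (norm_nonneg _)
  have hsum : ∀ f : lp (fun _ : X => ℂ) 1, Summable fun x => f x • e x :=
    fun f => (hsumn f).of_norm
  set S₀ : lp (fun _ : X => ℂ) 1 →ₗ[ℂ] E :=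
    { toFun := fun f => ∑' x, f x • e x
      map_add' := by
        intro f g
        simp only []
        rw [← Summable.tsum_add (hsum f) (hsum g)]
        exact tsum_congr fun x => by simp [add_smul]
      map_smul' := by
        intro c f
        simp only [RingHom.id_apply]
        rw [← Summable.tsum_const_smul c (hsum f)]
        exact tsum_congr fun x => by simp [smul_smul] } with hS₀
  have hbound : ∀ f, ‖S₀ f‖ ≤ M * ‖f‖
  · intro f
    have h1 : ‖S₀ f‖ ≤ ∑' x, ‖f x • e x‖ := norm_tsum_le_tsum_norm (hsumn f)
    have h2 : ∑' x, ‖f x • e x‖ ≤ ∑' x, ‖f x‖ * M := by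
      refine Summable.tsum_le_tsum ?_ (hsumn f) ((hfs f).mul_right M)
      intro x
      rw [norm_smul]
      exact mul_le_mul_of_nonneg_left (heM x) (norm_nonneg _)
    have h3 : (∑' x, ‖f x‖ * M) = M * ∑' x, ‖f x‖ := by
      rw [tsum_mul_right]; ring
    have h4 : (∑' x, ‖f x‖) = ‖f‖ := by
      rw [lp.norm_eq_tsum_rpow hp f]
      simp
    calc ‖S₀ f‖ ≤ ∑' x, ‖f x • e x‖ := h1
      _ ≤ ∑' x, ‖f x‖ * M := h2
      _ = M * ‖f‖ := by rw [h3, h4]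
  refine ⟨S₀.mkContinuous M hbound, ?_⟩
  ext f
  have hS : HasSum (fun x => f x • e x) (S₀ f) := (hsum f).hasSum
  have hqS : HasSum (fun x => T (lp.single 1 x (f x))) (q (S₀ f)) := by
    have := hS.mapL q
    refine this.congr_fun fun x => ?_
    have h5 : lp.single (E := fun _ : X => ℂ) 1 x (f x) = f x • lp.single 1 x (1:ℂ) := by
      rw [← lp.single_smul]
      simp
    rw [h5]
    simp [he x]
  have hTf : HasSum (fun x => T (lp.single 1 x (f x))) (T f) :=
    (lp.hasSum_single (by norm_num) f).mapL T
  simpa using hqS.unique hTf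
end
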